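/- The PF-D3 coefficient function e1 satisfies lim_{v→0⁺} e1(v) = 90987349/53222400 and lim_{v→0⁺} (e1(v) − 90987349/53222400)/v² = −16301796103/72648576000; in particular e1 tends to the corresponding coefficient of the classical Quinlan–Tremaine method as v → 0, and its v²-Taylor coefficient is four times that of the PF-D0 coefficient b1. -/

import Mathlib

/-!
Write `s = sin (v / 2)` and `c = cos (v / 2)`. Clearing denominators turns
`e₁(v) - (L + K v²)`, with `L = 90987349/53222400` and `K = -16301796103/72648576000`, into
`N(v) / (3072 v⁵ s¹⁰ c⁵)` for an explicit polynomial `N` in `v`, `s`, `c` with 28 terms. The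
denominator is bounded below by a positive multiple of `v¹⁵` near `0`, so it suffices that
`N(v) = O(v¹⁸)`. This is checked with Taylor models of order 18 on `[0, 1/8]`: rational
polynomials with a rigorous remainder bound `e * v ^ 18`, starting from the exponential series for
`sin` and `cos` and propagated exactly through sums and products. Evaluated in the kernel, the
model of `N` has all 18 coefficients equal to `0` and remainder constant at most `6`, whence
`e₁(v) = L + K v² + O(v³)` as `v → 0⁺`.
-/

open Filter

/-- The variable coefficient `e₁(v)` of the method PF-D3 (phase lag and its first,
second and third derivatives vanish at frequency `v`). -/
noncomputable def pfd3e1 (v : ℝ) : ℝ :=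
  ((-108) * v ^ 5 / (Real.sin (v / 2)) ^ 10
      + 9 * v ^ 3 * (53 * v ^ 2 + 12) / (Real.sin (v / 2)) ^ 8
      + 486 * v / (Real.sin (v / 2)) ^ 6
      - 2484 * v / (Real.sin (v / 2)) ^ 4
      - 6144 * v * (4 * v ^ 2 - 9) * Real.cos v
      + 3 * (Real.cos (v / 2) / Real.sin (v / 2))
          * (99 * v ^ 2 / (Real.sin (v / 2)) ^ 6
            + 9 * (16 - 9 * v ^ 2) / (Real.sin (v / 2)) ^ 4
            - 8 * (113 * v ^ 2 + 276) / (Real.sin (v / 2)) ^ 2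
            - 11266 * v ^ 2 + 10032)
      - 6144 * (v ^ 3 - 6 * v + 4 * Real.sin v)
      + 2 * v ^ 2 * (26624 * Real.sin v - 5635 * Real.tan (v / 2))
      + 5520 * Real.tan (v / 2)
      - 9 * v / (Real.cos (v / 2)) ^ 4 * (v * Real.tan (v / 2) - 6)
      - 6 / (Real.cos (v / 2)) ^ 2 * ((61 * v ^ 2 + 24) * Real.tan (v / 2) - 363 * v)
      + 32508 * v / (Real.cos v - 1))
    / (3072 * v ^ 5)

open Real Topology Asymptotics

namespace CoeffList

def eval : List ℚ → ℝ → ℝ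
  | [], _ => 0
  | a :: p, x => a + x * eval p x

def add : List ℚ → List ℚ → List ℚ
  | [], q => q
  | p, [] => p
  | a :: p, b :: q => (a + b) :: add p q

-- Skipping zero coefficients matters for the kernel: sine and cosine models are half zeros.
def mul : List ℚ → List ℚ → List ℚ
  | [], _ => []
  | a :: p, q => if a = 0 then 0 :: mul p q else add (q.map (a * ·)) (0 :: mul p q)

def absBound (r : ℚ) : List ℚ → ℚ
  | [] => 0
  | a :: p => |a| + r * absBound r p

@[simp] theorem eval_nil (x : ℝ) : eval [] x = 0 := rfl

@[simp] theorem eval_cons (a : ℚ) (p : List ℚ) (x : ℝ) : eval (a :: p) x = a + x * eval p x :=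
  rfl

@[simp] theorem eval_add (p q : List ℚ) (x : ℝ) : eval (add p q) x = eval p x + eval q x := by
  induction p, q using add.induct with
  | case1 q => simp [add]
  | case2 p hp => simp [add]
  | case3 a p b q ih => simp only [add, eval_cons, ih]; push_cast; ring

@[simp] theorem eval_map_mul (a : ℚ) (q : List ℚ) (x : ℝ) :
    eval (q.map (a * ·)) x = a * eval q x := by
  induction q with
  | nil => simp
  | cons b q ih => simp only [List.map_cons, eval_cons, ih]; push_cast; ring

@[simp] theorem eval_mul (p q : List ℚ) (x : ℝ) : eval (mul p q) x = eval p x * eval q x := by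
  induction p with
  | nil => simp [mul]
  | cons a p ih => by_cases ha : a = 0 <;> simp [mul, ha, ih] <;> ring

theorem eval_append (p q : List ℚ) (x : ℝ) :
    eval (p ++ q) x = eval p x + x ^ p.length * eval q x := by
  induction p with
  | nil => simp
  | cons a p ih => simp only [List.cons_append, eval_cons, ih, List.length_cons]; ring

theorem eval_eq_eval_take_add_eval_drop (n : ℕ) (p : List ℚ) (x : ℝ) :
    eval p x = eval (p.take n) x + x ^ n * eval (p.drop n) x := by
  induction p generalizing n with
  | nil => simp
  | cons a p ih =>
    cases n with
    | zero => simp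
    | succ n => simp only [List.take_succ_cons, List.drop_succ_cons, eval_cons, ih n]; ring

theorem eval_map_range (c : ℕ → ℚ) (n : ℕ) (x : ℝ) :
    eval ((List.range n).map c) x = ∑ m ∈ Finset.range n, (c m : ℝ) * x ^ m := by
  induction n with
  | zero => simp
  | succ n ih => simp [List.range_succ, eval_append, ih, Finset.sum_range_succ]; ring

theorem eval_eq_zero {p : List ℚ} (hp : ∀ a ∈ p, a = 0) (x : ℝ) : eval p x = 0 := by
  induction p with
  | nil => rfl
  | cons a p ih =>
    simp only [List.mem_cons, forall_eq_or_imp] at hp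
    simp [hp.1, ih hp.2]

theorem abs_eval_le_absBound {r : ℚ} {x : ℝ} (hx : 0 ≤ x) (hxr : x ≤ r) (p : List ℚ) :
    |eval p x| ≤ absBound r p := by
  induction p with
  | nil => simp [absBound]
  | cons a p ih =>
    simp only [eval_cons, absBound]
    push_cast
    calc |(a : ℝ) + x * eval p x| ≤ |(a : ℝ)| + x * |eval p x| := by
          simpa [abs_mul, abs_of_nonneg hx] using abs_add_le (a : ℝ) (x * eval p x)
      _ ≤ |(a : ℝ)| + r * absBound r p :=
          add_le_add_right (mul_le_mul hxr ih (abs_nonneg _) (hx.trans hxr)) _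

end CoeffList

def evalMonomials (ms : List (ℚ × ℕ × ℕ × ℕ)) (x y z : ℝ) : ℝ :=
  (ms.map fun m => (m.1 : ℝ) * x ^ m.2.1 * y ^ m.2.2.1 * z ^ m.2.2.2).sum

structure TaylorModel where
  coeffs : List ℚ
  err : ℚ

namespace TaylorModel

open CoeffList

def Approximates (n : ℕ) (r : ℚ) (A : TaylorModel) (f : ℝ → ℝ) : Prop :=
  ∀ x : ℝ, 0 ≤ x → x ≤ r → |f x - eval A.coeffs x| ≤ A.err * x ^ n

def add (A B : TaylorModel) : TaylorModel := ⟨CoeffList.add A.coeffs B.coeffs, A.err + B.err⟩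

/-- From `f g - (P Q mod xⁿ) = (f - P)(g - Q) + (f - P) Q + P (g - Q) + xⁿ (P Q div xⁿ)`. -/
def mul (n : ℕ) (r : ℚ) (A B : TaylorModel) : TaylorModel :=
  let PQ := CoeffList.mul A.coeffs B.coeffs
  ⟨PQ.take n, A.err * absBound r B.coeffs + B.err * absBound r A.coeffs
    + A.err * B.err * r ^ n + absBound r (PQ.drop n)⟩

def pow (n : ℕ) (r : ℚ) (A : TaylorModel) : ℕ → TaylorModel
  | 0 => ⟨[1], 0⟩
  | k + 1 => mul n r (pow n r A k) A

def monomials (n : ℕ) (r : ℚ) (Y Z : TaylorModel) : List (ℚ × ℕ × ℕ × ℕ) → TaylorModel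
  | [] => ⟨[], 0⟩
  | (a, i, j, k) :: ms => add (mul n r (mul n r (mul n r ⟨[a], 0⟩ (pow n r ⟨[0, 1], 0⟩ i))
      (pow n r Y j)) (pow n r Z k)) (monomials n r Y Z ms)

def scaledTaylor (c : ℕ → ℤ) (a : ℚ) (n : ℕ) : TaylorModel :=
  ⟨(List.range n).map fun m => c m * a ^ m / m.factorial, |a| ^ n * (n + 1) / (n.factorial * n)⟩

variable {n : ℕ} {r : ℚ}

theorem approximates_const (a : ℚ) : (⟨[a], 0⟩ : TaylorModel).Approximates n r fun _ => a := by
  intro x _ _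
  simp

theorem approximates_id : (⟨[0, 1], 0⟩ : TaylorModel).Approximates n r id := by
  intro x _ _
  simp

theorem Approximates.err_nonneg {A : TaylorModel} {f : ℝ → ℝ} (hA : A.Approximates n r f)
    (hr : 0 < r) : 0 ≤ A.err := by
  have h := (abs_nonneg _).trans (hA r (by positivity) le_rfl)
  exact_mod_cast nonneg_of_mul_nonneg_left h (by positivity)

theorem Approximates.add {A B : TaylorModel} {f g : ℝ → ℝ} (hA : A.Approximates n r f)
    (hB : B.Approximates n r g) : (A.add B).Approximates n r fun x => f x + g x := by
  intro x hx hxr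
  simp only [TaylorModel.add, eval_add, Rat.cast_add]
  calc |f x + g x - (eval A.coeffs x + eval B.coeffs x)|
      ≤ |f x - eval A.coeffs x| + |g x - eval B.coeffs x| := by
        rw [add_sub_add_comm]; exact abs_add_le _ _
    _ ≤ A.err * x ^ n + B.err * x ^ n := add_le_add (hA x hx hxr) (hB x hx hxr)
    _ = (A.err + B.err) * x ^ n := by ring

theorem Approximates.mul {A B : TaylorModel} {f g : ℝ → ℝ} (hA : A.Approximates n r f)
    (hB : B.Approximates n r g) (hr : 0 < r) :
    (A.mul n r B).Approximates n r fun x => f x * g x := by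
  intro x hx hxr
  simp only [TaylorModel.mul]
  push_cast
  set P := eval A.coeffs x
  set Q := eval B.coeffs x
  set PQ := CoeffList.mul A.coeffs B.coeffs
  have hsplit : f x * g x - eval (PQ.take n) x = (f x - P) * (g x - Q) + (f x - P) * Q
      + P * (g x - Q) + x ^ n * eval (PQ.drop n) x := by
    linear_combination
      (eval_mul A.coeffs B.coeffs x).symm.trans (eval_eq_eval_take_add_eval_drop n PQ x)
  have he : (0 : ℝ) ≤ A.err := by exact_mod_cast hA.err_nonneg hr
  have hd : (0 : ℝ) ≤ B.err := by exact_mod_cast hB.err_nonneg hr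
  have hf := hA x hx hxr
  have hg := hB x hx hxr
  have hP := abs_eval_le_absBound hx hxr A.coeffs
  have hxn0 : 0 ≤ x ^ n := pow_nonneg hx n
  have hfg : |f x - P| * |g x - Q| ≤ A.err * x ^ n * (B.err * r ^ n) :=
    mul_le_mul hf (hg.trans (mul_le_mul_of_nonneg_left (pow_le_pow_left₀ hx hxr n) hd))
      (abs_nonneg _) (by positivity)
  have hfQ : |f x - P| * |Q| ≤ A.err * x ^ n * absBound r B.coeffs :=
    mul_le_mul hf (abs_eval_le_absBound hx hxr B.coeffs) (abs_nonneg _) (by positivity)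
  have hPg : |P| * |g x - Q| ≤ absBound r A.coeffs * (B.err * x ^ n) :=
    mul_le_mul hP hg (abs_nonneg _) ((abs_nonneg _).trans hP)
  have hhigh : x ^ n * |eval (PQ.drop n) x| ≤ x ^ n * absBound r (PQ.drop n) :=
    mul_le_mul_of_nonneg_left (abs_eval_le_absBound hx hxr _) hxn0
  have htri : |f x * g x - eval (PQ.take n) x| ≤ |(f x - P) * (g x - Q)|
      + |(f x - P) * Q| + |P * (g x - Q)| + |x ^ n * eval (PQ.drop n) x| := by
    rw [hsplit]
    exact (abs_add_le _ _).trans (add_le_add_left (abs_add_three _ _ _) _)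
  rw [abs_mul, abs_mul, abs_mul, abs_mul, abs_of_nonneg hxn0] at htri
  linarith

theorem Approximates.pow {A : TaylorModel} {f : ℝ → ℝ} (hA : A.Approximates n r f) (hr : 0 < r)
    (k : ℕ) : (A.pow n r k).Approximates n r fun x => f x ^ k := by
  induction k with
  | zero =>
    have h := approximates_const (n := n) (r := r) 1
    simp only [Rat.cast_one] at h
    simpa only [TaylorModel.pow, pow_zero] using h
  | succ k ih => simpa only [TaylorModel.pow, pow_succ] using ih.mul hA hr

theorem approximates_monomials {Y Z : TaylorModel} {f g : ℝ → ℝ} (hY : Y.Approximates n r f)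
    (hZ : Z.Approximates n r g) (hr : 0 < r) (ms : List (ℚ × ℕ × ℕ × ℕ)) :
    (monomials n r Y Z ms).Approximates n r fun x => evalMonomials ms x (f x) (g x) := by
  induction ms with
  | nil =>
    intro x _ _
    simp [evalMonomials, monomials]
  | cons m ms ih =>
    obtain ⟨a, i, j, k⟩ := m
    simp only [evalMonomials, List.map_cons, List.sum_cons]
    exact ((((approximates_const a).mul (approximates_id.pow hr i) hr).mul (hY.pow hr j) hr).mul
      (hZ.pow hr k) hr).add ih

theorem approximates_scaledTaylor {F : ℝ → ℝ} {c : ℕ → ℤ}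
    (hF : ∀ θ : ℝ, |θ| ≤ 1 → |F θ - ∑ m ∈ Finset.range n, c m * θ ^ m / m.factorial| ≤
      |θ| ^ n * ((n.succ : ℝ) * (n.factorial * n : ℝ)⁻¹))
    {a : ℚ} (har : |a| * r ≤ 1) :
    (scaledTaylor c a n).Approximates n r fun x => F (a * x) := by
  intro x hx hxr
  have hax : |(a : ℝ) * x| = |(a : ℝ)| * x := by rw [abs_mul, abs_of_nonneg hx]
  have hθ : |(a : ℝ) * x| ≤ 1 := by
    rw [hax]
    calc |(a : ℝ)| * x ≤ |(a : ℝ)| * r := mul_le_mul_of_nonneg_left hxr (abs_nonneg _)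
      _ ≤ 1 := by exact_mod_cast har
  simp only [scaledTaylor, eval_map_range]
  refine (le_of_eq ?_).trans ((hF _ hθ).trans (le_of_eq ?_))
  · congr 2
    refine Finset.sum_congr rfl fun m _ => ?_
    push_cast
    ring
  · rw [hax]
    push_cast
    ring

end TaylorModel

def iPow : ℕ → ℤ × ℤ
  | 0 => (1, 0)
  | m + 1 => (-(iPow m).2, (iPow m).1)

theorem Complex.I_pow_eq_iPow (m : ℕ) :
    Complex.I ^ m = ((iPow m).1 : ℂ) + ((iPow m).2 : ℂ) * Complex.I := by
  induction m with
  | zero => simp [iPow]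
  | succ m ih =>
    rw [pow_succ, ih]
    simp only [iPow, Int.cast_neg]
    linear_combination ((iPow m).2 : ℂ) * Complex.I_sq

theorem Complex.sum_ofReal_mul_I_pow_div_factorial (θ : ℝ) (n : ℕ) :
    ∑ m ∈ Finset.range n, ((θ : ℂ) * Complex.I) ^ m / m.factorial =
      ((∑ m ∈ Finset.range n, (iPow m).1 * θ ^ m / m.factorial : ℝ) : ℂ)
        + ((∑ m ∈ Finset.range n, (iPow m).2 * θ ^ m / m.factorial : ℝ) : ℂ) * Complex.I := by
  push_cast
  rw [Finset.sum_mul, ← Finset.sum_add_distrib]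
  refine Finset.sum_congr rfl fun m _ => ?_
  rw [mul_pow, Complex.I_pow_eq_iPow]
  ring

theorem Real.abs_cos_sub_sum_le {θ : ℝ} (hθ : |θ| ≤ 1) {n : ℕ} (hn : 0 < n) :
    |cos θ - ∑ m ∈ Finset.range n, (iPow m).1 * θ ^ m / m.factorial| ≤
      |θ| ^ n * ((n.succ : ℝ) * (n.factorial * n : ℝ)⁻¹) := by
  have h := Complex.exp_bound (x := θ * Complex.I) (by simpa using hθ) hn
  rw [Complex.sum_ofReal_mul_I_pow_div_factorial] at h
  simp only [Complex.norm_mul, Complex.norm_real, Complex.norm_I, mul_one, Real.norm_eq_abs] at h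
  refine (le_of_eq ?_).trans ((Complex.abs_re_le_norm _).trans h)
  simp only [Complex.sub_re, Complex.add_re, Complex.exp_ofReal_mul_I_re, Complex.ofReal_re,
    Complex.re_ofReal_mul, Complex.I_re, mul_zero, add_zero]

theorem Real.abs_sin_sub_sum_le {θ : ℝ} (hθ : |θ| ≤ 1) {n : ℕ} (hn : 0 < n) :
    |sin θ - ∑ m ∈ Finset.range n, (iPow m).2 * θ ^ m / m.factorial| ≤
      |θ| ^ n * ((n.succ : ℝ) * (n.factorial * n : ℝ)⁻¹) := by
  have h := Complex.exp_bound (x := θ * Complex.I) (by simpa using hθ) hn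
  rw [Complex.sum_ofReal_mul_I_pow_div_factorial] at h
  simp only [Complex.norm_mul, Complex.norm_real, Complex.norm_I, mul_one, Real.norm_eq_abs] at h
  refine (le_of_eq ?_).trans ((Complex.abs_im_le_norm _).trans h)
  simp only [Complex.sub_im, Complex.add_im, Complex.exp_ofReal_mul_I_im, Complex.ofReal_im,
    Complex.im_ofReal_mul, Complex.I_im, mul_one, zero_add]

namespace TaylorModel

def cos (a : ℚ) (n : ℕ) : TaylorModel := scaledTaylor (fun m => (iPow m).1) a n

def sin (a : ℚ) (n : ℕ) : TaylorModel := scaledTaylor (fun m => (iPow m).2) a n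

theorem approximates_cos {a r : ℚ} (har : |a| * r ≤ 1) {n : ℕ} (hn : 0 < n) :
    (TaylorModel.cos a n).Approximates n r fun x => Real.cos (a * x) :=
  approximates_scaledTaylor (fun _ hθ => Real.abs_cos_sub_sum_le hθ hn) har

theorem approximates_sin {a r : ℚ} (har : |a| * r ≤ 1) {n : ℕ} (hn : 0 < n) :
    (TaylorModel.sin a n).Approximates n r fun x => Real.sin (a * x) :=
  approximates_scaledTaylor (fun _ hθ => Real.abs_sin_sub_sum_le hθ hn) har

end TaylorModel

noncomputable def pfd3e1Quadratic (v : ℝ) : ℝ :=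
  90987349 / 53222400 - 16301796103 / 72648576000 * v ^ 2

def pfd3e1Remainder : List (ℚ × ℕ × ℕ × ℕ) :=
  [(432, 0, 5, 6),
   (-6624, 0, 7, 6),
   (30096, 0, 9, 6),
   (-144, 0, 11, 2),
   (5520, 0, 11, 4),
   (-49152, 0, 11, 6),
   (486, 1, 4, 5),
   (-2484, 1, 6, 5),
   (-16254, 1, 8, 5),
   (54, 1, 10, 1),
   (2178, 1, 10, 3),
   (92160, 1, 10, 5),
   (-110592, 1, 12, 5),
   (297, 2, 3, 6),
   (-243, 2, 5, 6),
   (-2712, 2, 7, 6),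
   (-33798, 2, 9, 6),
   (-9, 2, 11, 0),
   (-366, 2, 11, 2),
   (-11270, 2, 11, 4),
   (106496, 2, 11, 6),
   (108, 3, 2, 5),
   (-30720, 3, 10, 5),
   (49152, 3, 12, 5),
   (-108, 5, 0, 5),
   (477, 5, 2, 5),
   (-90987349 / 17325, 5, 10, 5),
   (16301796103 / 23648625, 7, 10, 5)]

theorem pfd3e1_sub_eq {v : ℝ} (hv : v ≠ 0) (hs : sin (v / 2) ≠ 0) (hc : cos (v / 2) ≠ 0) :
    pfd3e1 v - pfd3e1Quadratic v =
      evalMonomials pfd3e1Remainder v (sin (v / 2)) (cos (v / 2))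
        / (3072 * v ^ 5 * sin (v / 2) ^ 10 * cos (v / 2) ^ 5) := by
  have hsin : sin v = 2 * sin (v / 2) * cos (v / 2) := by
    rw [← Real.sin_two_mul, mul_div_cancel₀ v two_ne_zero]
  have hcos : cos v = 1 - 2 * sin (v / 2) ^ 2 := by
    rw [← Real.cos_two_mul_eq_one_sub, mul_div_cancel₀ v two_ne_zero]
  rw [eq_div_iff (by positivity), pfd3e1, pfd3e1Quadratic, hsin, hcos, Real.tan_eq_sin_div_cos,
    show (1 : ℝ) - 2 * sin (v / 2) ^ 2 - 1 = -(2 * sin (v / 2) ^ 2) by ring]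
  simp only [evalMonomials, pfd3e1Remainder, List.map_cons, List.map_nil, List.sum_cons,
    List.sum_nil]
  push_cast
  field_simp
  ring

def pfd3e1RemainderModel : TaylorModel :=
  .monomials 18 (1 / 8) (.sin (1 / 2) 18) (.cos (1 / 2) 18) pfd3e1Remainder

theorem pfd3e1RemainderModel_approximates :
    pfd3e1RemainderModel.Approximates 18 (1 / 8)
      fun v => evalMonomials pfd3e1Remainder v (sin (v / 2)) (cos (v / 2)) := by
  have h := TaylorModel.approximates_monomials
    (TaylorModel.approximates_sin (a := 1 / 2) (r := 1 / 8) (by norm_num) (n := 18) (by norm_num))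
    (TaylorModel.approximates_cos (a := 1 / 2) (r := 1 / 8) (by norm_num) (n := 18) (by norm_num))
    (by norm_num) pfd3e1Remainder
  simp only [Rat.cast_div, Rat.cast_one, Rat.cast_ofNat, one_div_mul_eq_div] at h
  exact h

theorem pfd3e1RemainderModel_coeffs : ∀ a ∈ pfd3e1RemainderModel.coeffs, a = 0 := by
  decide +kernel

theorem pfd3e1RemainderModel_err_le : pfd3e1RemainderModel.err ≤ 6 := by
  decide +kernel

theorem abs_evalMonomials_pfd3e1Remainder_le {v : ℝ} (hv : 0 ≤ v) (hv' : v ≤ 1 / 8) :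
    |evalMonomials pfd3e1Remainder v (sin (v / 2)) (cos (v / 2))| ≤ 6 * v ^ 18 := by
  have h := pfd3e1RemainderModel_approximates v hv (by push_cast; linarith)
  rw [CoeffList.eval_eq_zero pfd3e1RemainderModel_coeffs, sub_zero] at h
  have he : (pfd3e1RemainderModel.err : ℝ) ≤ 6 := by exact_mod_cast pfd3e1RemainderModel_err_le
  exact h.trans (mul_le_mul_of_nonneg_right he (by positivity))

theorem abs_pfd3e1_sub_le {v : ℝ} (hv : 0 < v) (hv' : v ≤ 1 / 8) :
    |pfd3e1 v - pfd3e1Quadratic v| ≤ 65536 * v ^ 3 := by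
  have hs : v / 4 ≤ sin (v / 2) := by
    have h := Real.mul_le_sin (x := v / 2) (by positivity) (by linarith [Real.pi_gt_three])
    have : v / 4 ≤ 2 / π * (v / 2) := by
      rw [div_mul_div_comm, div_le_div_iff₀ (by norm_num) (by positivity)]
      nlinarith [Real.pi_le_four]
    linarith
  have hc : 1 / 2 ≤ cos (v / 2) := by
    nlinarith [Real.one_sub_sq_div_two_le_cos (x := v / 2)]
  have hD : 3 / 32768 * v ^ 15 ≤ 3072 * v ^ 5 * sin (v / 2) ^ 10 * cos (v / 2) ^ 5 :=
    calc 3 / 32768 * v ^ 15 = 3072 * v ^ 5 * (v / 4) ^ 10 * (1 / 2) ^ 5 := by ring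
      _ ≤ _ := by gcongr
  have hD0 : 0 < 3072 * v ^ 5 * sin (v / 2) ^ 10 * cos (v / 2) ^ 5 :=
    lt_of_lt_of_le (by positivity) hD
  rw [pfd3e1_sub_eq hv.ne' (lt_of_lt_of_le (by positivity) hs).ne'
    (lt_of_lt_of_le (by norm_num) hc).ne', abs_div, abs_of_pos hD0, div_le_iff₀ hD0]
  calc _ ≤ 6 * v ^ 18 := abs_evalMonomials_pfd3e1Remainder_le hv.le hv'
    _ = 65536 * v ^ 3 * (3 / 32768 * v ^ 15) := by ring
    _ ≤ _ := by gcongr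

theorem tendsto_pfd3e1_sub_div_sq :
    Tendsto (fun v => (pfd3e1 v - pfd3e1Quadratic v) / v ^ 2) (𝓝[>] 0) (𝓝 0) := by
  have hlin : Tendsto (fun v : ℝ => 65536 * v) (𝓝[>] 0) (𝓝 0) := by
    simpa using ((continuous_const_mul (65536 : ℝ)).tendsto 0).mono_left nhdsWithin_le_nhds
  refine squeeze_zero_norm' ?_ hlin
  filter_upwards [Ioc_mem_nhdsGT (show (0 : ℝ) < 1 / 8 by norm_num)] with v ⟨hv, hv'⟩
  rw [norm_div, norm_pow, Real.norm_eq_abs, Real.norm_eq_abs, abs_of_pos hv,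
    div_le_iff₀ (by positivity)]
  calc _ ≤ 65536 * v ^ 3 := abs_pfd3e1_sub_le hv hv'
    _ = 65536 * v * v ^ 2 := by ring

/-- The PF-D3 coefficient `e₁` tends to the classical Quinlan–Tremaine coefficient
as `v → 0⁺`, and its `v²`-Taylor coefficient is four times that of the PF-D0
coefficient `b₁`. -/
theorem pfd3_e1_limit :
    Tendsto pfd3e1 (nhdsWithin 0 (Set.Ioi 0)) (nhds (90987349 / 53222400)) ∧
    Tendsto (fun v : ℝ => (pfd3e1 v - 90987349 / 53222400) / v ^ 2)
      (nhdsWithin 0 (Set.Ioi 0)) (nhds (-16301796103 / 72648576000)) := by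
  have hquot : Tendsto (fun v : ℝ => (pfd3e1 v - 90987349 / 53222400) / v ^ 2) (𝓝[>] 0)
      (𝓝 (-16301796103 / 72648576000)) := by
    rw [neg_div, ← zero_sub]
    refine (tendsto_pfd3e1_sub_div_sq.sub_const _).congr' ?_
    filter_upwards [self_mem_nhdsWithin] with v (hv : 0 < v)
    field_simp
    simp only [pfd3e1Quadratic]
    ring
  refine ⟨?_, hquot⟩
  have hsq : Tendsto (fun v : ℝ => v ^ 2) (𝓝[>] 0) (𝓝 0) := by
    simpa using ((continuous_pow 2).tendsto (0 : ℝ)).mono_left nhdsWithin_le_nhds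
  have h := (hsq.mul hquot).const_add (90987349 / 53222400 : ℝ)
  rw [zero_mul, add_zero] at h
  refine h.congr' ?_
  filter_upwards [self_mem_nhdsWithin] with v (hv : 0 < v)
  field_simp
  ring
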